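/- arXiv:2206.04395 — 4 statements merged into one kernel-verified Lean document; each statement's English description precedes it below -/
import Mathlib

section
/- Let G be a simple, connected, finite graph of order n with at least one edge. Then α''(G) ≤ n + ⌊(α(G) − n + 2α'(G))/2⌋ − α'(G). -/
open Finset

variable {V : Type*}

def IsIndepF (G : SimpleGraph V) (s : Finset V) : Prop :=
  ∀ u ∈ s, ∀ v ∈ s, ¬ G.Adj u v

def IsMatchingF (G : SimpleGraph V) (M : Finset (Sym2 V)) : Prop :=
  (∀ e ∈ M, e ∈ G.edgeSet) ∧
    ∀ e ∈ M, ∀ f ∈ M, e ≠ f → ∀ v : V, ¬(v ∈ e ∧ v ∈ f)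

def IsTotalIndepF (G : SimpleGraph V) (s : Finset V) (M : Finset (Sym2 V)) : Prop :=
  IsIndepF G s ∧ IsMatchingF G M ∧ ∀ v ∈ s, ∀ e ∈ M, v ∉ e

noncomputable def indepNum (G : SimpleGraph V) : ℕ :=
  sSup {k | ∃ s : Finset V, IsIndepF G s ∧ s.card = k}

noncomputable def matchNum (G : SimpleGraph V) : ℕ :=
  sSup {k | ∃ M : Finset (Sym2 V), IsMatchingF G M ∧ M.card = k}

noncomputable def totalIndepNum (G : SimpleGraph V) : ℕ :=
  sSup {k | ∃ (s : Finset V) (M : Finset (Sym2 V)),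
    IsTotalIndepF G s M ∧ s.card + M.card = k}

noncomputable def edgeDomNum (G : SimpleGraph V) : ℕ :=
  sInf {k | ∃ D : Finset (Sym2 V), (∀ e ∈ D, e ∈ G.edgeSet) ∧
    (∀ e ∈ G.edgeSet, e ∉ D → ∃ f ∈ D, ∃ v : V, v ∈ e ∧ v ∈ f) ∧ D.card = k}

/-- The two-element finset of endpoints of an element of `Sym2 V`. -/
def endSetAux [DecidableEq V] (e : Sym2 V) : Finset V :=
  Sym2.lift ⟨fun a b => ({a, b} : Finset V), fun a b => Finset.pair_comm a b⟩ e

lemma mem_endSetAux [DecidableEq V] {v : V} {e : Sym2 V} : v ∈ endSetAux e ↔ v ∈ e := by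
  induction e using Sym2.ind with
  | _ a b => simp [endSetAux, Sym2.mem_iff]

lemma card_endSetAux [DecidableEq V] {e : Sym2 V} (h : ¬ e.IsDiag) :
    (endSetAux e).card = 2 := by
  induction e using Sym2.ind with
  | _ a b =>
    simp only [Sym2.mk_isDiag_iff] at h
    simp [endSetAux, Finset.card_insert_of_notMem, h]

lemma totalIndep_key [Fintype V] [DecidableEq V] {G : SimpleGraph V} {s : Finset V}
    {M : Finset (Sym2 V)} (h : IsTotalIndepF G s M) :
    s.card + 2 * M.card ≤ Fintype.card V := by
  obtain ⟨hs, ⟨hM1, hM2⟩, hsm⟩ := h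
  have hpd : ∀ x ∈ M, ∀ y ∈ M, x ≠ y → Disjoint (endSetAux x) (endSetAux y) := by
    intro x hx y hy hxy
    rw [Finset.disjoint_left]
    intro a hax hay
    exact hM2 x hx y hy hxy a ⟨mem_endSetAux.1 hax, mem_endSetAux.1 hay⟩
  have hcard : (M.biUnion endSetAux).card = 2 * M.card := by
    rw [Finset.card_biUnion hpd]
    rw [Finset.sum_congr rfl
      (fun e he => card_endSetAux (G.not_isDiag_of_mem_edgeSet (hM1 e he)))]
    simp [mul_comm]
  have hdisj : Disjoint s (M.biUnion endSetAux) := by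
    rw [Finset.disjoint_left]
    intro a ha hab
    obtain ⟨e, he, hae⟩ := Finset.mem_biUnion.1 hab
    exact hsm a ha e he (mem_endSetAux.1 hae)
  calc s.card + 2 * M.card = (s ∪ M.biUnion endSetAux).card := by
        rw [Finset.card_union_of_disjoint hdisj, hcard]
    _ ≤ Fintype.card V := Finset.card_le_univ _

theorem stmt7 [Fintype V] (G : SimpleGraph V) (n : ℕ)
    (hn : Fintype.card V = n) (hconn : G.Connected) (hedge : G.edgeSet.Nonempty) :
    (totalIndepNum G : ℤ) ≤
      (n : ℤ) + ((indepNum G : ℤ) - n + 2 * matchNum G).fdiv 2 - matchNum G := by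
  classical
  subst hn
  have hbdd : BddAbove {k | ∃ s : Finset V, IsIndepF G s ∧ s.card = k} :=
    ⟨Fintype.card V, by rintro k ⟨t, _, rfl⟩; exact t.card_le_univ⟩
  have hmain : totalIndepNum G ≤ (Fintype.card V + indepNum G) / 2 := by
    apply csSup_le
    · refine ⟨0, ∅, ∅, ⟨?_, ⟨?_, ?_⟩, ?_⟩, by simp⟩ <;> simp [IsIndepF]
    · rintro k ⟨s, M, h, rfl⟩
      have h1 := totalIndep_key h
      have h2 : s.card ≤ indepNum G := le_csSup hbdd ⟨s, h.1, rfl⟩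
      omega
  have hcast : totalIndepNum G * 2 ≤ Fintype.card V + indepNum G := by omega
  rw [Int.fdiv_eq_ediv_of_nonneg _ (by norm_num)]
  have : (totalIndepNum G : ℤ) * 2 ≤ (Fintype.card V : ℤ) + indepNum G := by
    exact_mod_cast hcast
  omega
end

section
/- Let G be a simple, connected, finite graph of order n with at least one edge. If X is a total independent set of size k, then the number e of edges contained in X satisfies k − α(G) ≤ e ≤ n − k. -/
open Finset

variable {V : Type*}

theorem stmt13 [Fintype V] (G : SimpleGraph V) (n : ℕ)
    (hn : Fintype.card V = n) (hconn : G.Connected) (hedge : G.edgeSet.Nonempty)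
    (s : Finset V) (M : Finset (Sym2 V)) (hX : IsTotalIndepF G s M)
    (k : ℕ) (hk : s.card + M.card = k) :
    (k : ℤ) - indepNum G ≤ (M.card : ℤ) ∧ (M.card : ℤ) ≤ (n : ℤ) - k := by
  classical
  obtain ⟨hind, hM, hdisj⟩ := hX
  have hbdd : BddAbove {k | ∃ s : Finset V, IsIndepF G s ∧ s.card = k} := by
    refine ⟨Fintype.card V, ?_⟩
    rintro m ⟨t, -, rfl⟩
    exact Finset.card_le_univ t
  have h1 : s.card ≤ indepNum G := le_csSup hbdd ⟨s, hind, rfl⟩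
  set ef : Sym2 V → Finset V := fun e => Finset.univ.filter (· ∈ e) with hef
  have hmemef : ∀ (e) (v : V), v ∈ ef e ↔ v ∈ e := by
    intro e v; simp [hef]
  have hcard2 : ∀ e ∈ M, (ef e).card = 2 := by
    intro e he
    induction e using Sym2.inductionOn with
    | hf a b =>
      have hadj : G.Adj a b := (SimpleGraph.mem_edgeSet G).mp (hM.1 _ he)
      have hab : a ≠ b := hadj.ne
      have : ef s(a, b) = {a, b} := by
        ext v
        simp [hmemef, Sym2.mem_iff]
      rw [this, Finset.card_insert_of_notMem (by simp [hab]), Finset.card_singleton]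
  have hpair : ∀ e ∈ M, ∀ f ∈ M, e ≠ f → Disjoint (ef e) (ef f) := by
    intro e he f hf hef'
    rw [Finset.disjoint_left]
    intro v hv hv'
    exact hM.2 e he f hf hef' v ⟨(hmemef e v).mp hv, (hmemef f v).mp hv'⟩
  have hbi : (M.biUnion ef).card = 2 * M.card := by
    rw [Finset.card_biUnion hpair]
    rw [Finset.sum_congr rfl hcard2]
    simp [mul_comm]
  have hds : Disjoint s (M.biUnion ef) := by
    rw [Finset.disjoint_left]
    intro v hv hv'
    obtain ⟨e, he, hve⟩ := Finset.mem_biUnion.mp hv'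
    exact hdisj v hv e he ((hmemef e v).mp hve)
  have htot : s.card + 2 * M.card ≤ n := by
    have := Finset.card_le_univ (s ∪ M.biUnion ef)
    rw [Finset.card_union_of_disjoint hds, hbi, hn] at this
    exact this
  constructor
  · omega
  · omega
end

section
/- Let G be a simple, connected, finite graph of order n with at least one edge. Then α''(G) ≤ (n + α(G))/2. -/
open Finset

variable {V : Type*}

open scoped Classical in
noncomputable def symFinset [Fintype V] (e : Sym2 V) : Finset V :=
  Finset.univ.filter (· ∈ e)

lemma mem_symFinset [Fintype V] {e : Sym2 V} {v : V} : v ∈ symFinset e ↔ v ∈ e := by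
  classical
  simp [symFinset]

lemma card_symFinset [Fintype V] {e : Sym2 V} (he : ¬ e.IsDiag) :
    (symFinset e).card = 2 := by
  classical
  induction e using Sym2.ind with
  | _ a b =>
    have hab : a ≠ b := by simpa using he
    have : symFinset s(a, b) = {a, b} := by
      ext v; simp [mem_symFinset, Sym2.mem_iff, Finset.mem_insert]
    rw [this, Finset.card_insert_of_notMem (by simpa using hab)]
    simp

lemma key [Fintype V] (G : SimpleGraph V) (s : Finset V) (M : Finset (Sym2 V))
    (h : IsTotalIndepF G s M) : s.card + 2 * M.card ≤ Fintype.card V := by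
  classical
  obtain ⟨hs, ⟨hM1, hM2⟩, hsM⟩ := h
  have hdisj : ∀ e ∈ M, ∀ f ∈ M, e ≠ f → Disjoint (symFinset e) (symFinset f) := by
    intro e he f hf hef
    rw [Finset.disjoint_left]
    intro v hv hv'
    exact hM2 e he f hf hef v ⟨mem_symFinset.mp hv, mem_symFinset.mp hv'⟩
  have hbi : (M.biUnion symFinset).card = 2 * M.card := by
    rw [Finset.card_biUnion hdisj]
    rw [Finset.sum_congr rfl (fun e he => card_symFinset
      (SimpleGraph.not_isDiag_of_mem_edgeSet G (hM1 e he)))]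
    simp [mul_comm]
  have hdisj2 : Disjoint s (M.biUnion symFinset) := by
    rw [Finset.disjoint_left]
    intro v hv hv'
    obtain ⟨e, he, hve⟩ := Finset.mem_biUnion.mp hv'
    exact hsM v hv e he (mem_symFinset.mp hve)
  calc s.card + 2 * M.card = (s ∪ M.biUnion symFinset).card := by
        rw [Finset.card_union_of_disjoint hdisj2, hbi]
    _ ≤ Fintype.card V := Finset.card_le_univ _

theorem stmt14 [Fintype V] (G : SimpleGraph V) (n : ℕ)
    (hn : Fintype.card V = n) (hconn : G.Connected) (hedge : G.edgeSet.Nonempty) :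
    2 * totalIndepNum G ≤ n + indepNum G := by
  classical
  subst hn
  set S := {k | ∃ (s : Finset V) (M : Finset (Sym2 V)),
    IsTotalIndepF G s M ∧ s.card + M.card = k} with hS
  obtain ⟨e, he⟩ := hedge
  have hne : (1 : ℕ) ∈ S := by
    refine ⟨∅, {e}, ⟨?_, ⟨?_, ?_⟩, ?_⟩, by simp⟩
    · intro u hu; simp at hu
    · intro f hf; simp at hf; subst hf; exact he
    · intro f hf g hg hfg; simp at hf hg; subst hf; subst hg; exact absurd rfl hfg
    · intro v hv; simp at hv
  have hbdd : ∀ k ∈ S, k ≤ Fintype.card V := by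
    rintro k ⟨s, M, hTI, rfl⟩
    have := key G s M hTI
    omega
  have hmem : totalIndepNum G ∈ S :=
    Nat.sSup_mem ⟨1, hne⟩ ⟨Fintype.card V, hbdd⟩
  obtain ⟨s, M, hTI, hcard⟩ := hmem
  have h1 : s.card + 2 * M.card ≤ Fintype.card V := key G s M hTI
  have h2 : s.card ≤ indepNum G := by
    apply le_csSup
    · refine ⟨Fintype.card V, ?_⟩
      rintro k ⟨t, _, rfl⟩
      exact Finset.card_le_univ t
    · exact ⟨s, hTI.1, rfl⟩
  omega
end

section
/- Let G be a simple, connected, finite graph of order n. Then the edge domination number and total independence number satisfy γ'(G) + α''(G) = n. -/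
open Finset

variable {V : Type*}

section Aux

open scoped Classical

def EdgeDomF (G : SimpleGraph V) (D : Finset (Sym2 V)) : Prop :=
  (∀ e ∈ D, e ∈ G.edgeSet) ∧
    ∀ e ∈ G.edgeSet, e ∉ D → ∃ f ∈ D, ∃ v : V, v ∈ e ∧ v ∈ f

variable [Fintype V]

noncomputable def coveredF (D : Finset (Sym2 V)) : Finset V :=
  univ.filter (fun v => ∃ f ∈ D, v ∈ f)

lemma mem_coveredF {D : Finset (Sym2 V)} {v : V} :
    v ∈ coveredF D ↔ ∃ f ∈ D, v ∈ f := by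
  simp [coveredF]

lemma coveredF_card_le (D : Finset (Sym2 V)) :
    (coveredF D).card ≤ Fintype.card V :=
  Finset.card_le_univ _

lemma coveredF_card_matching {G : SimpleGraph V} {M : Finset (Sym2 V)}
    (hM : IsMatchingF G M) : (coveredF M).card = 2 * M.card := by
  have hbU : coveredF M = M.biUnion (fun e => univ.filter (· ∈ e)) := by
    ext v; simp [coveredF]
  rw [hbU, Finset.card_biUnion]
  · rw [Finset.sum_congr rfl (g := fun _ => 2), Finset.sum_const, smul_eq_mul, mul_comm]
    intro e he
    have heE := hM.1 e he
    induction e using Sym2.ind with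
    | _ a b =>
      have hab : a ≠ b := (G.mem_edgeSet.mp heE).ne
      have : (univ.filter (· ∈ s(a, b)) : Finset V) = {a, b} := by
        ext x; simp [Sym2.mem_iff]
      rw [this, Finset.card_insert_of_notMem (by simpa using hab), Finset.card_singleton]
  · intro e he f hf hef
    simp only [Finset.disjoint_left, Finset.mem_filter]
    rintro x ⟨-, hxe⟩ ⟨-, hxf⟩
    exact hM.2 e he f hf hef x ⟨hxe, hxf⟩

lemma exists_matching_edgeDom (G : SimpleGraph V) :
    ∀ N : ℕ, ∀ D : Finset (Sym2 V),
      (Fintype.card V + 1) * D.card + (Fintype.card V - (coveredF D).card) ≤ N →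
      EdgeDomF G D →
      ∃ M : Finset (Sym2 V), EdgeDomF G M ∧ IsMatchingF G M ∧ M.card ≤ D.card := by
  intro N
  induction N with
  | zero =>
    intro D hμ hD
    have h0 : (Fintype.card V + 1) * D.card = 0 :=
      Nat.eq_zero_of_add_eq_zero_right (Nat.le_zero.mp hμ)
    have hc : D.card = 0 :=
      (Nat.mul_eq_zero.mp h0).resolve_left (Nat.succ_ne_zero _)
    have hD0 : D = ∅ := Finset.card_eq_zero.mp hc
    subst hD0
    exact ⟨∅, hD, ⟨by simp, by simp⟩, le_rfl⟩
  | succ N ih =>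
    intro D hμ hD
    by_cases hmatch : ∀ e ∈ D, ∀ f ∈ D, e ≠ f → ∀ v : V, ¬(v ∈ e ∧ v ∈ f)
    · exact ⟨D, hD, ⟨hD.1, hmatch⟩, le_rfl⟩
    push_neg at hmatch
    obtain ⟨e, he, f, hf, hef, v, hve, hvf⟩ := hmatch
    have heE : e ∈ G.edgeSet := hD.1 e he
    obtain ⟨u, hveq⟩ : ∃ u, s(v, u) = e := ⟨Sym2.Mem.other hve, Sym2.other_spec hve⟩
    have hue : u ∈ e := by rw [← hveq]; simp
    have hadj : G.Adj v u := by rw [← SimpleGraph.mem_edgeSet, hveq]; exact heE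
    have hmem_e : ∀ x, x ∈ e → x = v ∨ x = u := by
      intro x hx; rw [← hveq] at hx; simpa [Sym2.mem_iff] using hx
    have hfe : f ∈ D.erase e := Finset.mem_erase.mpr ⟨fun h => hef h.symm, hf⟩
    have hcard1 : (D.erase e).card + 1 = D.card := Finset.card_erase_add_one he
    by_cases hA : ∀ g ∈ G.edgeSet, u ∈ g → ∃ f' ∈ D.erase e, ∃ x : V, x ∈ g ∧ x ∈ f'
    · -- can just delete e
      have hdom' : EdgeDomF G (D.erase e) := by
        refine ⟨fun a ha => hD.1 a (Finset.mem_of_mem_erase ha), ?_⟩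
        intro a haE haD'
        by_cases hua : u ∈ a
        · exact hA a haE hua
        by_cases hae : a = e
        · exact ⟨f, hfe, v, by rw [hae]; exact hve, hvf⟩
        by_cases haD : a ∈ D
        · exact absurd (Finset.mem_erase.mpr ⟨hae, haD⟩) haD'
        obtain ⟨f', hf', x, hxa, hxf'⟩ := hD.2 a haE haD
        by_cases hfe' : f' = e
        · rcases hmem_e x (hfe' ▸ hxf') with rfl | rfl
          · exact ⟨f, hfe, x, hxa, hvf⟩
          · exact absurd hxa hua
        · exact ⟨f', Finset.mem_erase.mpr ⟨hfe', hf'⟩, x, hxa, hxf'⟩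
      have hμ' : (Fintype.card V + 1) * (D.erase e).card +
          (Fintype.card V - (coveredF (D.erase e)).card) ≤ N := by
        have h1 := coveredF_card_le (D.erase e)
        have h2 : (Fintype.card V + 1) * D.card =
            (Fintype.card V + 1) * (D.erase e).card + (Fintype.card V + 1) := by
          rw [← hcard1]; ring
        omega
      obtain ⟨M, hMd, hMm, hMc⟩ := ih (D.erase e) hμ' hdom'
      exact ⟨M, hMd, hMm, by omega⟩
    · -- replace e by a pendant edge g at u
      push_neg at hA
      obtain ⟨g, hgE, hug, hgnd⟩ := hA
      -- hgnd : ∀ f' ∈ D.erase e, ∀ x, x ∈ g → x ∉ f'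
      obtain ⟨w, hgeq⟩ : ∃ w, s(u, w) = g := ⟨Sym2.Mem.other hug, Sym2.other_spec hug⟩
      have hwg : w ∈ g := by rw [← hgeq]; simp
      have hadj' : G.Adj u w := by rw [← SimpleGraph.mem_edgeSet, hgeq]; exact hgE
      have hwu : w ≠ u := hadj'.ne'
      have hge : g ≠ e := by
        intro h
        exact hgnd f hfe v (h ▸ hve) hvf
      have hgD' : g ∉ D.erase e := fun h => hgnd g h u hug hug
      set D' := insert g (D.erase e) with hD'def
      have hcard' : D'.card = D.card := by
        rw [hD'def, Finset.card_insert_of_notMem hgD', hcard1]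
      have hfD' : f ∈ D' := Finset.mem_insert_of_mem hfe
      have hgDm : g ∈ D' := Finset.mem_insert_self _ _
      have hdom' : EdgeDomF G D' := by
        refine ⟨?_, ?_⟩
        · intro a ha
          rcases Finset.mem_insert.mp ha with rfl | ha
          · exact hgE
          · exact hD.1 a (Finset.mem_of_mem_erase ha)
        intro a haE haD'
        by_cases hua : u ∈ a
        · exact ⟨g, hgDm, u, hua, hug⟩
        by_cases hwa : w ∈ a
        · exact ⟨g, hgDm, w, hwa, hwg⟩
        by_cases hae : a = e
        · exact ⟨f, hfD', v, by rw [hae]; exact hve, hvf⟩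
        by_cases haD : a ∈ D
        · exact absurd (Finset.mem_insert_of_mem (Finset.mem_erase.mpr ⟨hae, haD⟩)) haD'
        obtain ⟨f', hf', x, hxa, hxf'⟩ := hD.2 a haE haD
        by_cases hfe' : f' = e
        · rcases hmem_e x (hfe' ▸ hxf') with rfl | rfl
          · exact ⟨f, hfD', x, hxa, hvf⟩
          · exact absurd hxa hua
        · exact ⟨f', Finset.mem_insert_of_mem (Finset.mem_erase.mpr ⟨hfe', hf'⟩), x, hxa, hxf'⟩
      have hsub : coveredF D ⊆ coveredF D' := by
        intro y hy
        obtain ⟨f'', hf'', hyf''⟩ := mem_coveredF.mp hy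
        by_cases hfe'' : f'' = e
        · rcases hmem_e y (hfe'' ▸ hyf'') with rfl | rfl
          · exact mem_coveredF.mpr ⟨f, hfD', hvf⟩
          · exact mem_coveredF.mpr ⟨g, hgDm, hug⟩
        · exact mem_coveredF.mpr ⟨f'', Finset.mem_insert_of_mem
            (Finset.mem_erase.mpr ⟨hfe'', hf''⟩), hyf''⟩
      have hwD : w ∉ coveredF D := by
        intro hwc
        obtain ⟨f'', hf'', hwf''⟩ := mem_coveredF.mp hwc
        by_cases hfe'' : f'' = e
        · rcases hmem_e w (hfe'' ▸ hwf'') with rfl | rfl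
          · -- w = v, so g = s(u, v) = e
            exact hge (by rw [← hgeq, ← hveq, Sym2.eq_swap])
          · exact hwu rfl
        · exact hgnd f'' (Finset.mem_erase.mpr ⟨hfe'', hf''⟩) w hwg hwf''
      have hwD' : w ∈ coveredF D' := mem_coveredF.mpr ⟨g, hgDm, hwg⟩
      have hlt : (coveredF D).card < (coveredF D').card :=
        Finset.card_lt_card (Finset.ssubset_iff_of_subset hsub |>.mpr ⟨w, hwD', hwD⟩)
      have hμ' : (Fintype.card V + 1) * D'.card +
          (Fintype.card V - (coveredF D').card) ≤ N := by
        rw [hcard']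
        have h1 := coveredF_card_le D'
        omega
      obtain ⟨M, hMd, hMm, hMc⟩ := ih D' hμ' hdom'
      exact ⟨M, hMd, hMm, by omega⟩

end Aux
section Rest

open scoped Classical

variable [Fintype V]

lemma tis_of_matching (G : SimpleGraph V) (M : Finset (Sym2 V))
    (hdom : EdgeDomF G M) (hm : IsMatchingF G M) :
    IsTotalIndepF G (univ \ coveredF M) M ∧
      (univ \ coveredF M).card + M.card = Fintype.card V - M.card ∧
      2 * M.card ≤ Fintype.card V := by
  have hcov := coveredF_card_matching hm
  have hle := coveredF_card_le M
  have hnotc : ∀ x ∈ univ \ coveredF M, ∀ e ∈ M, x ∉ e := by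
    intro x hx e he hxe
    exact (Finset.mem_sdiff.mp hx).2 (mem_coveredF.mpr ⟨e, he, hxe⟩)
  refine ⟨⟨?_, hm, hnotc⟩, ?_, by omega⟩
  · intro a ha b hb hab
    have habE : s(a, b) ∈ G.edgeSet := G.mem_edgeSet.mpr hab
    by_cases hmem : s(a, b) ∈ M
    · exact hnotc a ha _ hmem (by simp)
    obtain ⟨f, hf, x, hxa, hxf⟩ := hdom.2 _ habE hmem
    rcases Sym2.mem_iff.mp hxa with h' | h'
    · subst h'; exact hnotc x ha f hf hxf
    · subst h'; exact hnotc x hb f hf hxf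
  · have : (univ \ coveredF M).card = Fintype.card V - (coveredF M).card := by
      rw [Finset.card_sdiff_of_subset (Finset.subset_univ _), Finset.card_univ]
    omega

lemma exists_nbr (G : SimpleGraph V) (hconn : G.Connected)
    (hcard : 2 ≤ Fintype.card V) (v : V) : ∃ w, G.Adj v w := by
  obtain ⟨w, hw⟩ := Fintype.exists_ne_of_one_lt_card (by omega) v
  obtain ⟨p⟩ := hconn.preconnected v w
  cases p with
  | nil => exact absurd rfl hw
  | cons h p => exact ⟨_, h⟩

lemma edgedom_of_tis (G : SimpleGraph V) (hconn : G.Connected)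
    (s : Finset V) (M : Finset (Sym2 V)) (h : IsTotalIndepF G s M) :
    ∃ D : Finset (Sym2 V), EdgeDomF G D ∧
      D.card + (s.card + M.card) ≤ Fintype.card V := by
  have hcov := coveredF_card_matching h.2.1
  have hdisj : Disjoint s (coveredF M) := by
    simp only [Finset.disjoint_left]
    intro x hx hxc
    obtain ⟨e, he, hxe⟩ := mem_coveredF.mp hxc
    exact h.2.2 x hx e he hxe
  have hunion : s.card + 2 * M.card ≤ Fintype.card V := by
    have := Finset.card_le_univ (s ∪ coveredF M)
    rw [Finset.card_union_of_disjoint hdisj] at this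
    omega
  by_cases hcard : 2 ≤ Fintype.card V
  · set T := univ \ (s ∪ coveredF M) with hT
    have hTcard : T.card = Fintype.card V - (s.card + 2 * M.card) := by
      rw [hT, Finset.card_sdiff_of_subset (Finset.subset_univ _), Finset.card_univ,
        Finset.card_union_of_disjoint hdisj, hcov]
    set pick : V → Sym2 V := fun t => s(t, Classical.choose (exists_nbr G hconn hcard t))
      with hpick
    have hpickE : ∀ t, pick t ∈ G.edgeSet := fun t =>
      G.mem_edgeSet.mpr (Classical.choose_spec (exists_nbr G hconn hcard t))
    have hpickmem : ∀ t, t ∈ pick t := fun t => by simp [hpick]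
    refine ⟨M ∪ T.image pick, ⟨?_, ?_⟩, ?_⟩
    · intro e he
      rcases Finset.mem_union.mp he with he | he
      · exact h.2.1.1 e he
      · obtain ⟨t, _, rfl⟩ := Finset.mem_image.mp he
        exact hpickE t
    · -- domination
      have hclaim : ∀ x : V, x ∉ s → ∃ f ∈ M ∪ T.image pick, x ∈ f := by
        intro x hx
        by_cases hxc : x ∈ coveredF M
        · obtain ⟨e, he, hxe⟩ := mem_coveredF.mp hxc
          exact ⟨e, Finset.mem_union_left _ he, hxe⟩
        · have hxT : x ∈ T := by
            rw [hT]; simp only [Finset.mem_sdiff, Finset.mem_univ, Finset.mem_union]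
            exact ⟨trivial, fun h' => h'.elim hx hxc⟩
          exact ⟨pick x, Finset.mem_union_right _ (Finset.mem_image_of_mem _ hxT),
            hpickmem x⟩
      intro a haE haD
      induction a using Sym2.ind with
      | _ x y =>
        have hadj : G.Adj x y := G.mem_edgeSet.mp haE
        by_cases hxs : x ∈ s
        · have hys : y ∉ s := fun hy => h.1 x hxs y hy hadj
          obtain ⟨f, hf, hyf⟩ := hclaim y hys
          exact ⟨f, hf, y, by simp, hyf⟩
        · obtain ⟨f, hf, hxf⟩ := hclaim x hxs
          exact ⟨f, hf, x, by simp, hxf⟩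
    · have h1 : (M ∪ T.image pick).card ≤ M.card + T.card :=
        le_trans (Finset.card_union_le _ _)
          (by gcongr; exact Finset.card_image_le)
      omega
  · -- fewer than two vertices: no edges at all
    have hnoedge : ∀ e, e ∉ G.edgeSet := by
      intro e he
      induction e using Sym2.ind with
      | _ x y =>
        have hadj : G.Adj x y := G.mem_edgeSet.mp he
        have : x = y := by
          have := Fintype.card_le_one_iff.mp (show Fintype.card V ≤ 1 by omega)
          exact this x y
        exact hadj.ne this
    have hM : M = ∅ := by
      apply Finset.eq_empty_of_forall_notMem
      intro e he; exact hnoedge e (h.2.1.1 e he)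
    refine ⟨∅, ⟨by simp, fun e he => absurd he (hnoedge e)⟩, ?_⟩
    have := Finset.card_le_univ s
    rw [hM]
    simpa using this

end Rest

theorem stmt19 [Fintype V] (G : SimpleGraph V) (n : ℕ)
    (hn : Fintype.card V = n) (hconn : G.Connected) :
    edgeDomNum G + totalIndepNum G = n := by
  classical
  subst hn
  set EDset := {k | ∃ D : Finset (Sym2 V), (∀ e ∈ D, e ∈ G.edgeSet) ∧
    (∀ e ∈ G.edgeSet, e ∉ D → ∃ f ∈ D, ∃ v : V, v ∈ e ∧ v ∈ f) ∧ D.card = k}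
    with hEDset
  set TIset := {k | ∃ (s : Finset V) (M : Finset (Sym2 V)),
    IsTotalIndepF G s M ∧ s.card + M.card = k} with hTIset
  have hED_mem : ∀ D : Finset (Sym2 V), EdgeDomF G D → D.card ∈ EDset := by
    intro D hD; exact ⟨D, hD.1, hD.2, rfl⟩
  have hEDne : EDset.Nonempty := by
    refine ⟨G.edgeFinset.card, G.edgeFinset, ?_, ?_, rfl⟩
    · intro e he; exact SimpleGraph.mem_edgeFinset.mp he
    · intro e he hne; exact absurd (SimpleGraph.mem_edgeFinset.mpr he) hne
  have hTIbdd : BddAbove TIset := by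
    refine ⟨Fintype.card V, ?_⟩
    rintro k ⟨s, M, h, rfl⟩
    have hcov := coveredF_card_matching h.2.1
    have hdisj : Disjoint s (coveredF M) := by
      simp only [Finset.disjoint_left]
      intro x hx hxc
      obtain ⟨e, he, hxe⟩ := mem_coveredF.mp hxc
      exact h.2.2 x hx e he hxe
    have := Finset.card_le_univ (s ∪ coveredF M)
    rw [Finset.card_union_of_disjoint hdisj] at this
    omega
  have hTIne : TIset.Nonempty :=
    ⟨0, ∅, ∅, ⟨by simp [IsIndepF], ⟨by simp, by simp⟩, by simp⟩, by simp⟩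
  -- upper bound: edgeDomNum + totalIndepNum ≤ n
  have hub : edgeDomNum G + totalIndepNum G ≤ Fintype.card V := by
    obtain ⟨s, M, h, hcard⟩ := Nat.sSup_mem hTIne hTIbdd
    obtain ⟨D, hD, hDle⟩ := edgedom_of_tis G hconn s M h
    have h1 : edgeDomNum G ≤ D.card := Nat.sInf_le (hED_mem D hD)
    have h2 : totalIndepNum G = s.card + M.card := hcard.symm
    omega
  -- lower bound
  obtain ⟨D₀, hD₀a, hD₀b, hD₀c⟩ := Nat.sInf_mem hEDne
  have hD₀ : EdgeDomF G D₀ := ⟨hD₀a, hD₀b⟩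
  obtain ⟨M, hMdom, hMm, hMle⟩ := exists_matching_edgeDom G
    ((Fintype.card V + 1) * D₀.card + (Fintype.card V - (coveredF D₀).card)) D₀ le_rfl hD₀
  obtain ⟨htis, hcardeq, h2M⟩ := tis_of_matching G M hMdom hMm
  have hTIge : Fintype.card V - M.card ≤ totalIndepNum G := by
    rw [← hcardeq]
    exact le_csSup hTIbdd ⟨_, M, htis, rfl⟩
  have hEDle : edgeDomNum G ≤ M.card := Nat.sInf_le (hED_mem M hMdom)
  have hedef : edgeDomNum G = sInf EDset := rfl
  have hMled : M.card ≤ edgeDomNum G := by rw [hedef, ← hD₀c]; exact hMle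
  omega
end
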